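/- arXiv:1204.1432 — 2 statements merged into one kernel-verified Lean document; each statement's English description precedes it below -/
import Mathlib

section
/- Let A be the integer matrix [[1,1],[2,0]] (arising from the period doubling substitution a ↦ ab, b ↦ aa) and let G := {v ∈ ℚ² : Aⁿ v ∈ ℤ² for some n ∈ ℕ}. Then G = {a·(1,1) + b·(−1,2) + c·(1,0) : a ∈ ℤ[1/2], b, c ∈ ℤ}. -/
/-!
Write `A = [[1,1],[2,0]]`. Since `adj A * A = det A • 1 = -2 • 1`, `Aⁿ v ∈ ℤ²` forces
`2ⁿ v ∈ ℤ²`, and since `(1,-1)` is a left eigenvector of `A` for the eigenvalue `-1`,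
`v₀ - v₁ = ± ((Aⁿ v)₀ - (Aⁿ v)₁)` is an integer; hence
`v = v₁ • (1,1) + (v₀ - v₁) • (1,0)`. Conversely `(1,1)` is an eigenvector for the
eigenvalue `2`, so `Aᵐ` clears the denominator `2ᵐ` of its coefficient, while the integer
matrix `Aᵐ` keeps `b • (-1,2) + c • (1,0)` integral.
-/

open Matrix

section

variable {n R : Type*} [Fintype n] [DecidableEq n] [CommSemiring R] {M : Matrix n n R} {c : R}

theorem pow_mulVec_of_mulVec_eq_smul {v : n → R} (h : M *ᵥ v = c • v) (k : ℕ) :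
    M ^ k *ᵥ v = c ^ k • v := by
  induction k with
  | zero => simp
  | succ k ih => rw [pow_succ', ← mulVec_mulVec, ih, mulVec_smul, h, smul_smul, pow_succ]

theorem dotProduct_pow_mulVec_of_vecMul_eq_smul {u : n → R} (h : u ᵥ* M = c • u) (k : ℕ)
    (v : n → R) : u ⬝ᵥ (M ^ k *ᵥ v) = c ^ k * (u ⬝ᵥ v) := by
  rw [dotProduct_mulVec, ← mulVec_transpose, transpose_pow,
    pow_mulVec_of_mulVec_eq_smul (by rwa [mulVec_transpose]), smul_dotProduct, smul_eq_mul]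

end

theorem det_smul_eq_of_map_mulVec_eq {ι R S : Type*} [Fintype ι] [DecidableEq ι] [CommRing R]
    [CommRing S] (f : R →+* S) (M : Matrix ι ι R) {v : ι → S} {z : ι → R}
    (h : M.map f *ᵥ v = f ∘ z) : f M.det • v = f ∘ (M.adjugate *ᵥ z) := by
  calc f M.det • v = (adjugate (M.map f) * M.map f) *ᵥ v := by
        rw [adjugate_mul, smul_mulVec, one_mulVec, RingHom.map_det, RingHom.mapMatrix_apply]
    _ = f ∘ (M.adjugate *ᵥ z) := by
        rw [← mulVec_mulVec, h, ← RingHom.mapMatrix_apply, ← RingHom.map_adjugate]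
        exact funext fun i => (RingHom.map_mulVec f _ z i).symm

def periodDoublingMatrix : Matrix (Fin 2) (Fin 2) ℤ := !![1, 1; 2, 0]

theorem det_periodDoublingMatrix : periodDoublingMatrix.det = -2 := by
  simp [periodDoublingMatrix, det_fin_two]

theorem periodDoublingMatrix_pow_map (n : ℕ) :
    (periodDoublingMatrix ^ n).map (Int.castRingHom ℚ) = !![(1 : ℚ), 1; 2, 0] ^ n := by
  rw [Matrix.map_pow]
  congr 1
  ext i j
  fin_cases i <;> fin_cases j <;> simp [periodDoublingMatrix]

theorem periodDoubling_mulVec_one_one :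
    !![(1 : ℚ), 1; 2, 0] *ᵥ ![1, 1] = (2 : ℚ) • ![1, 1] := by
  ext i
  fin_cases i <;> norm_num

theorem vecMul_periodDoubling : ![(1 : ℚ), -1] ᵥ* !![1, 1; 2, 0] = (-1 : ℚ) • ![1, -1] := by
  ext i
  fin_cases i <;> norm_num

theorem exists_int_of_periodDoubling_pow_mulVec_eq_intCast {n : ℕ} {v : Fin 2 → ℚ}
    {z : Fin 2 → ℤ} (hz : !![(1 : ℚ), 1; 2, 0] ^ n *ᵥ v = fun i => (z i : ℚ)) :
    ∃ (k c : ℤ), v 1 = k / 2 ^ n ∧ v 0 - v 1 = c := by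
  have hdet := det_smul_eq_of_map_mulVec_eq (Int.castRingHom ℚ) (periodDoublingMatrix ^ n)
    (v := v) (z := z) (by rw [periodDoublingMatrix_pow_map, hz]; rfl)
  have hdiff := dotProduct_pow_mulVec_of_vecMul_eq_smul vecMul_periodDoubling n v
  set w := (periodDoublingMatrix ^ n).adjugate *ᵥ z
  have hsq : (-1 : ℚ) ^ n * (-1) ^ n = 1 := by rw [← mul_pow]; norm_num
  refine ⟨(-1) ^ n * w 1, (-1) ^ n * (z 0 - z 1), ?_, ?_⟩
  · have hw : (-2 : ℚ) ^ n * v 1 = w 1 := by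
      simpa [det_pow, det_periodDoublingMatrix] using congrFun hdet 1
    rw [eq_div_iff (by positivity)]
    push_cast
    rw [← hw, neg_pow (2 : ℚ)]
    linear_combination (-(2 ^ n * v 1)) * hsq
  · rw [hz] at hdiff
    simp only [dotProduct, Fin.sum_univ_two, cons_val_zero, cons_val_one, one_mul,
      neg_one_mul] at hdiff
    push_cast
    linear_combination (-(-1) ^ n) * hdiff - (v 0 - v 1) * hsq

theorem exists_periodDoubling_pow_mulVec_eq_intCast (k b c : ℤ) (m : ℕ) :
    ∃ z : Fin 2 → ℤ, !![(1 : ℚ), 1; 2, 0] ^ m *ᵥ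
      ((k / 2 ^ m : ℚ) • ![1, 1] + (b : ℚ) • ![-1, 2] + (c : ℚ) • ![1, 0]) =
        fun i => (z i : ℚ) := by
  have hsplit : (k / 2 ^ m : ℚ) • ![1, 1] + (b : ℚ) • ![-1, 2] + (c : ℚ) • ![1, 0] =
      (k / 2 ^ m : ℚ) • ![1, 1] + Int.castRingHom ℚ ∘ ![c - b, 2 * b] := by
    ext i
    fin_cases i <;> simp [sub_eq_neg_add, add_assoc, mul_comm]
  refine ⟨fun i => k + (periodDoublingMatrix ^ m *ᵥ ![c - b, 2 * b]) i, ?_⟩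
  rw [hsplit, mulVec_add, mulVec_smul,
    pow_mulVec_of_mulVec_eq_smul periodDoubling_mulVec_one_one,
    ← periodDoublingMatrix_pow_map, smul_smul, div_mul_cancel₀ _ (by positivity)]
  ext i
  rw [Pi.add_apply, ← RingHom.map_mulVec]
  fin_cases i <;> simp

/-- Let `A = [[1,1],[2,0]]` (period doubling substitution `a ↦ ab`, `b ↦ aa`) and
`G = {v ∈ ℚ² : Aⁿ v ∈ ℤ² for some n}`.  Then
`G = {a·(1,1) + b·(−1,2) + c·(1,0) : a ∈ ℤ[1/2], b, c ∈ ℤ}`. -/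
theorem stmt15 :
    {v : Fin 2 → ℚ | ∃ n : ℕ, ∀ i, ∃ z : ℤ,
        ((!![(1 : ℚ), 1; 2, 0]) ^ n).mulVec v i = (z : ℚ)} =
      {v | ∃ (a : ℚ) (b c : ℤ), (∃ (k : ℤ) (m : ℕ), a = (k : ℚ) / 2 ^ m) ∧
        v = a • ![1, 1] + (b : ℚ) • ![-1, 2] + (c : ℚ) • ![1, 0]} := by
  ext v
  constructor
  · rintro ⟨n, hn⟩
    choose z hz using hn
    obtain ⟨k, c, hk, hc⟩ := exists_int_of_periodDoubling_pow_mulVec_eq_intCast (funext hz)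
    refine ⟨v 1, 0, c, ⟨k, n, hk⟩, ?_⟩
    ext i
    fin_cases i <;> simp [← hc]
  · rintro ⟨a, b, c, ⟨k, m, rfl⟩, rfl⟩
    obtain ⟨z, hz⟩ := exists_periodDoubling_pow_mulVec_eq_intCast k b c m
    exact ⟨m, fun i => ⟨z i, congrFun hz i⟩⟩
end

section
/- Let à = [[0,1],[2,1]] (Thue–Morse) and G := {v ∈ ℚ² : Ãⁿ v ∈ ℤ² for some n ∈ ℕ}. There is no additive group homomorphism s : G → ℤ with s(1, −1) = 1. Equivalently, the injection ψ : ℤ → G, ψ(k) = k·(1, −1), admits no retraction, so the short exact sequence 0 → ℤ → G → G/ψ(ℤ) → 0 does not split. -/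
/-!
`(1, 2)` is an eigenvector of `Ã` for the eigenvalue `2`, so every `2⁻ⁿ • (1, 2)` lies in
`G`: `(1, 2)` is infinitely `2`-divisible in `G` and any homomorphism `s : G →+ ℤ` kills it.
But `(1, 2) = 3 • (1, 0) - 2 • (1, -1)`, so `s (1, -1) = 1` would give `3 • s (1, 0) = 2`.
-/

open Matrix

theorem Int.eq_zero_of_forall_pow_dvd {a b : ℤ} (ha : a.natAbs ≠ 1)
    (h : ∀ n : ℕ, a ^ n ∣ b) : b = 0 := by
  by_contra hb
  exact FiniteMultiplicity.not_iff_forall.mpr h (Int.finiteMultiplicity_iff.mpr ⟨ha, hb⟩)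

theorem AddMonoidHom.map_eq_zero_of_forall_pow_nsmul_eq {M : Type*} [AddMonoid M] (f : M →+ ℤ)
    {p : ℕ} (hp : p ≠ 1) {x : M} (h : ∀ n : ℕ, ∃ y, p ^ n • y = x) : f x = 0 :=
  Int.eq_zero_of_forall_pow_dvd (a := p) (by omega) fun n => by
    obtain ⟨y, rfl⟩ := h n
    exact ⟨f y, by rw [map_nsmul, nsmul_eq_mul, Nat.cast_pow]⟩

theorem Matrix.pow_mulVec_of_mulVec_eq_smul {n R : Type*} [Fintype n] [DecidableEq n]
    [CommSemiring R] {A : Matrix n n R} {u : n → R} {c : R} (hu : A *ᵥ u = c • u) (k : ℕ) :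
    (A ^ k) *ᵥ u = c ^ k • u := by
  induction k with
  | zero => simp
  | succ k ih => rw [pow_succ', ← mulVec_mulVec, ih, mulVec_smul, hu, smul_smul, ← pow_succ]

theorem Matrix.pow_mulVec_inv_pow_smul_of_mulVec_eq_smul {n K : Type*} [Fintype n]
    [DecidableEq n] [Field K] {A : Matrix n n K} {u : n → K} {c : K} (hc : c ≠ 0)
    (hu : A *ᵥ u = c • u) (k : ℕ) : (A ^ k) *ᵥ ((c ^ k)⁻¹ • u) = u := by
  rw [mulVec_smul, pow_mulVec_of_mulVec_eq_smul hu, smul_smul,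
    inv_mul_cancel₀ (pow_ne_zero k hc), one_smul]

/-- Let `Ã = [[0,1],[2,1]]` (Thue–Morse) and `G = {v ∈ ℚ² : Ãⁿ v ∈ ℤ² for some n}`.
There is no additive group homomorphism `s : G → ℤ` with `s(1, −1) = 1`; i.e. the
injection `ψ : ℤ → G`, `ψ(k) = k·(1, −1)`, admits no retraction, so the short exact
sequence `0 → ℤ → G → G/ψ(ℤ) → 0` does not split. -/
theorem stmt19 (G : AddSubgroup (Fin 2 → ℚ))
    (hG : (G : Set (Fin 2 → ℚ)) =
      {v | ∃ n : ℕ, ∀ i, ∃ z : ℤ, ((!![(0 : ℚ), 1; 2, 1]) ^ n).mulVec v i = (z : ℚ)})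
    (hmem : ![(1 : ℚ), -1] ∈ G) :
    ¬ ∃ s : G →+ ℤ, s ⟨![(1 : ℚ), -1], hmem⟩ = 1 := by
  rintro ⟨s, hs⟩
  have mem_iff (v : Fin 2 → ℚ) :
      v ∈ G ↔ ∃ n : ℕ, ∀ i, ∃ z : ℤ, (!![(0 : ℚ), 1; 2, 1] ^ n *ᵥ v) i = z := by
    rw [← SetLike.mem_coe, hG, Set.mem_ofPred_eq]
  have eigen : !![(0 : ℚ), 1; 2, 1] *ᵥ ![1, 2] = (2 : ℚ) • ![1, 2] := by
    ext i; fin_cases i <;> norm_num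
  have hw (n : ℕ) : ((2 : ℚ) ^ n)⁻¹ • ![(1 : ℚ), 2] ∈ G := by
    refine (mem_iff _).mpr ⟨n, fun i => ?_⟩
    rw [pow_mulVec_inv_pow_smul_of_mulVec_eq_smul two_ne_zero eigen n]
    fin_cases i; exacts [⟨1, by simp⟩, ⟨2, by simp⟩]
  have he₁ : ![(1 : ℚ), 0] ∈ G :=
    (mem_iff _).mpr ⟨0, fun i => by fin_cases i; exacts [⟨1, by simp⟩, ⟨0, by simp⟩]⟩
  have hw₀_eq : (⟨((2 : ℚ) ^ 0)⁻¹ • ![1, 2], hw 0⟩ : G) = 3 • ⟨_, he₁⟩ - 2 • ⟨_, hmem⟩ := by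
    ext i; fin_cases i <;> norm_num
  have hzero : s ⟨_, hw 0⟩ = 0 := s.map_eq_zero_of_forall_pow_nsmul_eq (p := 2) (by norm_num)
    fun n => ⟨⟨_, hw n⟩, by ext i; fin_cases i <;> simp⟩
  rw [hw₀_eq, map_sub, map_nsmul, map_nsmul, hs] at hzero
  simp only [nsmul_eq_mul, Nat.cast_ofNat] at hzero
  omega
end
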